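/- Let 0 < H < 1 and define γ_H(k) = (1/2)|k+1|^{2H} + (1/2)|k−1|^{2H} − |k|^{2H} for k ∈ ℤ. Then the kernel (n,m) ↦ γ_H(n−m) is positive semidefinite on ℤ: for every finite family of integers n₁, …, n_N and complex numbers z₁, …, z_N, ∑_{j=1}^N ∑_{l=1}^N γ_H(n_j − n_l) z_j conj(z_l) ≥ 0 (and this sum is real). -/

import Mathlib

/-!
For `0 < α < 2` the function `|d|^α` is a positive multiple of
`∫₀^∞ (1 - cos (d x)) x^(-1-α) dx` (substitute `x ↦ |d| x`). Since `cos (d x)` is a positive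
definite kernel in `d`, `1 - cos (d x)` and hence `|t_j - t_l|^α` are conditionally negative
definite: their quadratic forms are `≤ 0` on weights summing to zero. Now `γ_H` is minus half
the second difference of `|·|^{2H}`, so its real quadratic form is nonnegative. The complex
Hermitian form of a real symmetric kernel is the sum of the real forms at `Re z` and `Im z`,
its imaginary part cancelling by symmetry.
-/

/-- The covariance function of fractional Gaussian noise of Hurst index `H`:
`γ_H(k) = (1/2)|k+1|^{2H} + (1/2)|k−1|^{2H} − |k|^{2H}`. -/
noncomputable def gammaH (H : ℝ) (k : ℤ) : ℝ :=
  (1 / 2) * |((k + 1 : ℤ) : ℝ)| ^ (2 * H) + (1 / 2) * |((k - 1 : ℤ) : ℝ)| ^ (2 * H)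
    - |(k : ℝ)| ^ (2 * H)

open MeasureTheory Set Real Finset ComplexConjugate
open scoped ComplexOrder

noncomputable def levyIntegrand (α d x : ℝ) : ℝ := (1 - cos (d * x)) * x ^ (-1 - α)

noncomputable def levyIntegral (α d : ℝ) : ℝ := ∫ x in Ioi 0, levyIntegrand α d x

lemma levyIntegrand_nonneg (α d : ℝ) {x : ℝ} (hx : 0 < x) : 0 ≤ levyIntegrand α d x :=
  mul_nonneg (sub_nonneg.2 (cos_le_one _)) (rpow_nonneg hx.le _)

section LevyIntegral

variable {α : ℝ}

lemma integrableOn_levyIntegrand (hα0 : 0 < α) (hα2 : α < 2) (d : ℝ) :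
    IntegrableOn (levyIntegrand α d) (Ioi 0) := by
  have hmeas : AEStronglyMeasurable (levyIntegrand α d) (volume.restrict (Ioi 0)) :=
    ((continuous_const.sub (continuous_cos.comp (continuous_const_mul d))).continuousOn.mul
      (continuousOn_id.rpow_const fun x hx => Or.inl (ne_of_gt hx))).aestronglyMeasurable
      measurableSet_Ioi
  have hnear : IntegrableOn (levyIntegrand α d) (Ioc 0 1) := by
    have hdom : IntegrableOn (fun x => d ^ 2 / 2 * x ^ (1 - α)) (Ioc 0 1) :=
      (intervalIntegral.intervalIntegrable_rpow' (a := 0) (b := 1) (r := 1 - α)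
        (by linarith)).1.const_mul _
    refine hdom.mono' (hmeas.mono_set Ioc_subset_Ioi_self)
      (ae_restrict_of_forall_mem measurableSet_Ioc fun x hx => ?_)
    rw [norm_of_nonneg (levyIntegrand_nonneg α d hx.1)]
    calc levyIntegrand α d x ≤ (d * x) ^ 2 / 2 * x ^ (-1 - α) :=
          mul_le_mul_of_nonneg_right (by linarith [one_sub_sq_div_two_le_cos (x := d * x)])
            (rpow_nonneg hx.1.le _)
      _ = d ^ 2 / 2 * x ^ (1 - α) := by
          rw [show 1 - α = 2 + (-1 - α) by ring, rpow_add hx.1, rpow_two]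
          ring
  have hfar : IntegrableOn (levyIntegrand α d) (Ioi 1) := by
    refine ((integrableOn_Ioi_rpow_of_lt (a := -1 - α) (by linarith) one_pos).const_mul 2).mono'
      (hmeas.mono_set (Ioi_subset_Ioi zero_le_one))
      (ae_restrict_of_forall_mem measurableSet_Ioi fun x hx => ?_)
    have hx0 : (0 : ℝ) < x := zero_lt_one.trans hx
    rw [norm_of_nonneg (levyIntegrand_nonneg α d hx0)]
    exact mul_le_mul_of_nonneg_right (by linarith [neg_one_le_cos (d * x)])
      (rpow_nonneg hx0.le _)
  rw [← Ioc_union_Ioi_eq_Ioi zero_le_one]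
  exact hnear.union hfar

lemma levyIntegral_eq_abs_rpow_mul (hα : α ≠ 0) (d : ℝ) :
    levyIntegral α d = |d| ^ α * levyIntegral α 1 := by
  rcases eq_or_ne d 0 with rfl | hd
  · simp [levyIntegral, levyIntegrand, zero_rpow hα]
  have hd' : 0 < |d| := abs_pos.2 hd
  have hscale : ∀ x ∈ Ioi (0 : ℝ),
      levyIntegrand α d x = |d| ^ (1 + α) * levyIntegrand α 1 (|d| * x) := by
    intro x hx
    have hcos : cos (|d| * x) = cos (d * x) := by
      rcases abs_choice d with h | h <;> simp [h]
    rw [levyIntegrand, levyIntegrand, one_mul, hcos, mul_rpow hd'.le (le_of_lt hx),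
      mul_left_comm, ← mul_assoc (|d| ^ (1 + α)), ← rpow_add hd']
    norm_num
  calc levyIntegral α d
      = ∫ x in Ioi 0, |d| ^ (1 + α) * levyIntegrand α 1 (|d| * x) :=
        setIntegral_congr_fun measurableSet_Ioi hscale
    _ = |d| ^ (1 + α) * |d| ^ (-1 : ℝ) * levyIntegral α 1 := by
        rw [integral_const_mul, integral_comp_mul_left_Ioi _ _ hd', mul_zero, smul_eq_mul,
          rpow_neg_one, mul_assoc]
        rfl
    _ = |d| ^ α * levyIntegral α 1 := by
        rw [← rpow_add hd']
        norm_num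

lemma levyIntegral_one_pos (hα0 : 0 < α) (hα2 : α < 2) : 0 < levyIntegral α 1 := by
  rw [levyIntegral, setIntegral_pos_iff_support_of_nonneg_ae
    (ae_restrict_of_forall_mem measurableSet_Ioi fun x hx => levyIntegrand_nonneg α 1 hx)
    (integrableOn_levyIntegrand hα0 hα2 1)]
  have hsupp : Ioo 0 (2 * π) ⊆ Function.support (levyIntegrand α 1) ∩ Ioi 0 := by
    intro x hx
    have hcos : cos (1 * x) ≠ 1 := by
      rw [one_mul, Ne, cos_eq_one_iff_of_lt_of_lt (by linarith [hx.1, pi_pos]) hx.2]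
      exact hx.1.ne'
    exact ⟨mul_ne_zero (sub_ne_zero.2 hcos.symm) (rpow_pos_of_pos hx.1 _).ne', hx.1⟩
  refine lt_of_lt_of_le ?_ (measure_mono hsupp)
  simp [pi_pos]

end LevyIntegral

lemma gammaH_neg (H : ℝ) (k : ℤ) : gammaH H (-k) = gammaH H k := by
  simp only [gammaH]
  push_cast
  rw [show -(k : ℝ) + 1 = -((k : ℝ) - 1) by ring, show -(k : ℝ) - 1 = -((k : ℝ) + 1) by ring,
    abs_neg, abs_neg, abs_neg]
  ring

section Kernels

variable {ι : Type*} [Fintype ι]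

lemma sum_sum_cos_sub_mul_nonneg (s w : ι → ℝ) :
    0 ≤ ∑ j, ∑ l, cos (s j - s l) * w j * w l := by
  have hsq : ∑ j, ∑ l, cos (s j - s l) * w j * w l
      = (∑ j, w j * cos (s j)) ^ 2 + (∑ j, w j * sin (s j)) ^ 2 := by
    simp only [sq, sum_mul_sum, ← sum_add_distrib, cos_sub]
    refine sum_congr rfl fun j _ => sum_congr rfl fun l _ => ?_
    ring
  rw [hsq]
  positivity

lemma sum_sum_one_sub_cos_sub_mul_nonpos (s w : ι → ℝ) (hw : ∑ j, w j = 0) :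
    ∑ j, ∑ l, (1 - cos (s j - s l)) * w j * w l ≤ 0 := by
  have hw2 : ∑ j, ∑ l, w j * w l = 0 := by rw [← sum_mul_sum, hw, zero_mul]
  have hcos := sum_sum_cos_sub_mul_nonneg s w
  simp only [sub_mul, one_mul, sum_sub_distrib, hw2]
  linarith

lemma sum_sum_levyIntegral_mul_nonpos {α : ℝ} (hα0 : 0 < α) (hα2 : α < 2) (t w : ι → ℝ)
    (hw : ∑ j, w j = 0) : ∑ j, ∑ l, levyIntegral α (t j - t l) * w j * w l ≤ 0 := by
  have hint : ∀ j l, IntegrableOn (fun x => levyIntegrand α (t j - t l) x * w j * w l) (Ioi 0) :=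
    fun j l => ((integrableOn_levyIntegrand hα0 hα2 _).mul_const _).mul_const _
  have hswap : ∑ j, ∑ l, levyIntegral α (t j - t l) * w j * w l
      = ∫ x in Ioi 0, ∑ j, ∑ l, levyIntegrand α (t j - t l) x * w j * w l := by
    rw [integral_finsetSum _ fun j _ => integrable_finsetSum _ fun l _ => hint j l]
    refine sum_congr rfl fun j _ => ?_
    rw [integral_finsetSum _ fun l _ => hint j l]
    simp only [levyIntegral, integral_mul_const]
  rw [hswap]
  refine setIntegral_nonpos measurableSet_Ioi fun x hx => ?_
  have hfactor : ∑ j, ∑ l, levyIntegrand α (t j - t l) x * w j * w l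
      = (∑ j, ∑ l, (1 - cos (t j * x - t l * x)) * w j * w l) * x ^ (-1 - α) := by
    simp only [sum_mul, levyIntegrand, sub_mul]
    refine sum_congr rfl fun j _ => sum_congr rfl fun l _ => ?_
    ring
  rw [hfactor]
  exact mul_nonpos_of_nonpos_of_nonneg (sum_sum_one_sub_cos_sub_mul_nonpos _ w hw)
    (rpow_nonneg (le_of_lt hx) _)

theorem sum_sum_abs_sub_rpow_mul_nonpos {α : ℝ} (hα0 : 0 < α) (hα2 : α < 2) (t w : ι → ℝ)
    (hw : ∑ j, w j = 0) : ∑ j, ∑ l, |t j - t l| ^ α * w j * w l ≤ 0 := by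
  have h := sum_sum_levyIntegral_mul_nonpos hα0 hα2 t w hw
  have hscale : ∑ j, ∑ l, levyIntegral α (t j - t l) * w j * w l
      = levyIntegral α 1 * ∑ j, ∑ l, |t j - t l| ^ α * w j * w l := by
    simp only [mul_sum]
    refine sum_congr rfl fun j _ => sum_congr rfl fun l _ => ?_
    rw [levyIntegral_eq_abs_rpow_mul hα0.ne']
    ring
  rw [hscale] at h
  exact nonpos_of_mul_nonpos_right h (levyIntegral_one_pos hα0 hα2)

theorem sum_sum_ofReal_mul_conj_nonneg (K : ι → ι → ℝ) (hK : ∀ j l, K l j = K j l)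
    (hpos : ∀ w : ι → ℝ, 0 ≤ ∑ j, ∑ l, K j l * w j * w l) (z : ι → ℂ) :
    0 ≤ ∑ j, ∑ l, (K j l : ℂ) * z j * conj (z l) := by
  have hre : (∑ j, ∑ l, (K j l : ℂ) * z j * conj (z l)).re
      = ∑ j, ∑ l, K j l * (z j).re * (z l).re + ∑ j, ∑ l, K j l * (z j).im * (z l).im := by
    simp only [Complex.re_sum, ← sum_add_distrib]
    refine sum_congr rfl fun j _ => sum_congr rfl fun l _ => ?_
    simp only [Complex.mul_re, Complex.mul_im, Complex.ofReal_re, Complex.ofReal_im,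
      Complex.conj_re, Complex.conj_im]
    ring
  have him : (∑ j, ∑ l, (K j l : ℂ) * z j * conj (z l)).im
      = ∑ j, ∑ l, K j l * ((z j).im * (z l).re - (z j).re * (z l).im) := by
    simp only [Complex.im_sum]
    refine sum_congr rfl fun j _ => sum_congr rfl fun l _ => ?_
    simp only [Complex.mul_re, Complex.mul_im, Complex.ofReal_re, Complex.ofReal_im,
      Complex.conj_re, Complex.conj_im]
    ring
  have hanti : ∑ j, ∑ l, K j l * ((z j).im * (z l).re - (z j).re * (z l).im)
      = -∑ j, ∑ l, K j l * ((z j).im * (z l).re - (z j).re * (z l).im) := by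
    conv_lhs => rw [sum_comm]
    simp only [← sum_neg_distrib, hK]
    refine sum_congr rfl fun j _ => sum_congr rfl fun l _ => ?_
    ring
  rw [Complex.nonneg_iff, hre, him]
  exact ⟨add_nonneg (hpos _) (hpos _), (self_eq_neg.1 hanti).symm⟩

theorem sum_sum_gammaH_mul_nonneg {H : ℝ} (hH0 : 0 < H) (hH1 : H < 1) (n : ι → ℤ)
    (w : ι → ℝ) : 0 ≤ ∑ j, ∑ l, gammaH H (n j - n l) * w j * w l := by
  -- the form of `|·|^{2H}` on the points `n_j, n_j + 1` with the weights `-w_j, w_j`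
  let t : ι ⊕ ι → ℝ := Sum.elim (fun j => n j) (fun j => n j + 1)
  let u : ι ⊕ ι → ℝ := Sum.elim (-w) w
  have hu : ∑ a, u a = 0 := by simp [u, Fintype.sum_sum_type]
  have hsecond : ∑ a, ∑ b, |t a - t b| ^ (2 * H) * u a * u b
      = -2 * ∑ j, ∑ l, gammaH H (n j - n l) * w j * w l := by
    simp only [t, u, Fintype.sum_sum_type, Sum.elim_inl, Sum.elim_inr, mul_sum,
      ← sum_add_distrib]
    refine sum_congr rfl fun j _ => sum_congr rfl fun l _ => ?_
    simp only [gammaH, Pi.neg_apply]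
    push_cast
    rw [show (n j : ℝ) - (n l + 1) = n j - n l - 1 by ring,
      show (n j : ℝ) + 1 - n l = n j - n l + 1 by ring,
      show (n j : ℝ) + 1 - (n l + 1) = n j - n l by ring]
    ring
  have hcnd := sum_sum_abs_sub_rpow_mul_nonpos (α := 2 * H) (by linarith) (by linarith) t u hu
  linarith

end Kernels

/-- For `0 < H < 1`, the kernel `(n,m) ↦ γ_H(n−m)` is positive
semidefinite on `ℤ`: for all integers `n₁, …, n_N` and complex numbers `z₁, …, z_N`,
the sum `∑_j ∑_l γ_H(n_j − n_l) z_j conj(z_l)` is real and nonnegative. -/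
theorem stmt17 (H : ℝ) (hH0 : 0 < H) (hH1 : H < 1)
    (N : ℕ) (n : Fin N → ℤ) (z : Fin N → ℂ) :
    (∑ j : Fin N, ∑ l : Fin N,
        (gammaH H (n j - n l) : ℂ) * z j * (starRingEnd ℂ) (z l)).im = 0 ∧
    0 ≤ (∑ j : Fin N, ∑ l : Fin N,
        (gammaH H (n j - n l) : ℂ) * z j * (starRingEnd ℂ) (z l)).re := by
  have h := sum_sum_ofReal_mul_conj_nonneg (fun j l => gammaH H (n j - n l))
    (fun j l => by rw [← neg_sub, gammaH_neg]) (sum_sum_gammaH_mul_nonneg hH0 hH1 n) z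
  exact ⟨(Complex.nonneg_iff.1 h).2.symm, (Complex.nonneg_iff.1 h).1⟩
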